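/- arXiv:1407.7780 — 3 statements merged into one kernel-verified Lean document; each statement's English description precedes it below -/
import Mathlib

section
/- For a single base station with parameters ϑ > 0, κ ≥ 0, θ ∈ [0,1] with κθ ≤ 1, and ρ̂ ∈ (0,1), the function g(ρ) = e^{κθ(ρ - ρ̂)} · ϑρ/(1-ρ) satisfies g''(ρ) ≥ 4ϑe^{-1} for all ρ ∈ [0, 1-ε], where ε ∈ (0,1). In particular, g is strongly convex on [0, 1-ε]. -/
/-!
Write `g(t) = e^{a(t-ρ̂)} L(t)` with `a = κθ` and `L(t) = ϑt/(1-t)`. Then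
`g'' = e^{a(t-ρ̂)} (a²L + 2aL' + L'')` with `L' = ϑ/(1-t)²` and `L'' = 2ϑ/(1-t)³`.
On `[0, 1-ε]` we have `L ≥ 0`, `L' ≥ ϑ`, `L'' ≥ 2ϑ` and `e^{a(t-ρ̂)} ≥ e^{-a}`, so
`g'' ≥ 2ϑ(1+a)e^{-a} = 2ϑe⁻¹ · (1+a)e^{1-a} ≥ 4ϑe⁻¹`, because `e^{1-a} ≥ 2-a` and
`(1+a)(2-a) ≥ 2` for `a ∈ [0,1]`. A lower bound `m` on `g''` makes `g - m t²/2` convex,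
which is strong convexity with modulus `m`.
-/

open Set Real

lemma strongConvexOn_of_hasDerivAt2_ge {D : Set ℝ} (hD : Convex ℝ D) {f f' f'' : ℝ → ℝ}
    {m : ℝ} (hf : ∀ x ∈ D, HasDerivAt f (f' x) x) (hf' : ∀ x ∈ D, HasDerivAt f' (f'' x) x)
    (hm : ∀ x ∈ D, m ≤ f'' x) : StrongConvexOn D m f := by
  rw [strongConvexOn_iff_convex]
  have hsq (x : ℝ) : HasDerivAt (fun t : ℝ => m / 2 * ‖t‖ ^ 2) (m * x) x := by
    simp only [Real.norm_eq_abs, sq_abs]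
    exact ((hasDerivAt_pow 2 x).const_mul (m / 2)).congr_deriv (by ring)
  have hlin (x : ℝ) : HasDerivAt (fun t : ℝ => m * t) m x := by
    simpa using (hasDerivAt_id x).const_mul m
  refine convexOn_of_hasDerivWithinAt2_nonneg (f' := fun x => f' x - m * x)
    (f'' := fun x => f'' x - m) hD ?_ ?_ ?_ ?_
  · exact fun x hx => ((hf x hx).sub (hsq x)).continuousAt.continuousWithinAt
  · exact fun x hx => ((hf x (interior_subset hx)).sub (hsq x)).hasDerivWithinAt
  · exact fun x hx => ((hf' x (interior_subset hx)).sub (hlin x)).hasDerivWithinAt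
  · exact fun x hx => sub_nonneg.mpr (hm x (interior_subset hx))

lemma hasDerivAt_exp_affine_mul {h : ℝ → ℝ} {h' x : ℝ} (a c : ℝ) (hh : HasDerivAt h h' x) :
    HasDerivAt (fun t => exp (a * (t - c)) * h t) (exp (a * (x - c)) * (a * h x + h')) x := by
  have hexp : HasDerivAt (fun t => exp (a * (t - c))) (exp (a * (x - c)) * a) x := by
    simpa using (((hasDerivAt_id x).sub_const c).const_mul a).exp
  exact (hexp.mul hh).congr_deriv (by ring)

section Latency

variable (ϑ : ℝ) {x : ℝ}

lemma hasDerivAt_latency (hx : x ≠ 1) :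
    HasDerivAt (fun t => ϑ * t / (1 - t)) (ϑ / (1 - x) ^ 2) x := by
  have hx' : 1 - x ≠ 0 := sub_ne_zero.mpr hx.symm
  have := ((hasDerivAt_id' x).const_mul ϑ).fun_div ((hasDerivAt_id' x).const_sub 1) hx'
  refine this.congr_deriv ?_
  field_simp
  ring

lemma hasDerivAt_latency_deriv (hx : x ≠ 1) :
    HasDerivAt (fun t => ϑ / (1 - t) ^ 2) (2 * ϑ / (1 - x) ^ 3) x := by
  have hx' : 1 - x ≠ 0 := sub_ne_zero.mpr hx.symm
  have := (hasDerivAt_const x ϑ).fun_div (((hasDerivAt_id' x).const_sub 1).fun_pow 2)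
    (pow_ne_zero 2 hx')
  refine this.congr_deriv ?_
  field_simp
  ring

end Latency

section WeightedLatency

variable (a c ϑ : ℝ)

noncomputable def weightedLatency (t : ℝ) : ℝ :=
  exp (a * (t - c)) * (ϑ * t / (1 - t))

noncomputable def weightedLatencyDeriv (t : ℝ) : ℝ :=
  exp (a * (t - c)) * (a * (ϑ * t / (1 - t)) + ϑ / (1 - t) ^ 2)

noncomputable def weightedLatencyDeriv2 (t : ℝ) : ℝ :=
  exp (a * (t - c)) * (a ^ 2 * (ϑ * t / (1 - t)) + 2 * a * ϑ / (1 - t) ^ 2 + 2 * ϑ / (1 - t) ^ 3)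

variable {a c ϑ} {x : ℝ}

lemma hasDerivAt_weightedLatency (hx : x ≠ 1) :
    HasDerivAt (weightedLatency a c ϑ) (weightedLatencyDeriv a c ϑ x) x :=
  hasDerivAt_exp_affine_mul a c (hasDerivAt_latency ϑ hx)

lemma hasDerivAt_weightedLatencyDeriv (hx : x ≠ 1) :
    HasDerivAt (weightedLatencyDeriv a c ϑ) (weightedLatencyDeriv2 a c ϑ x) x := by
  have := hasDerivAt_exp_affine_mul a c
    (((hasDerivAt_latency ϑ hx).const_mul a).add (hasDerivAt_latency_deriv ϑ hx))
  refine this.congr_deriv ?_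
  simp only [Pi.add_apply, weightedLatencyDeriv2]
  ring

lemma deriv_deriv_weightedLatency (hx : x ≠ 1) :
    deriv (deriv (weightedLatency a c ϑ)) x = weightedLatencyDeriv2 a c ϑ x := by
  have hderiv : deriv (weightedLatency a c ϑ) =ᶠ[nhds x] weightedLatencyDeriv a c ϑ := by
    filter_upwards [isOpen_ne.mem_nhds hx] with y hy
    exact (hasDerivAt_weightedLatency hy).deriv
  rw [hderiv.deriv_eq]
  exact (hasDerivAt_weightedLatencyDeriv hx).deriv

end WeightedLatency

lemma two_le_one_add_mul_exp_one_sub {a : ℝ} (ha₀ : 0 ≤ a) (ha₁ : a ≤ 1) :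
    2 ≤ (1 + a) * exp (1 - a) := by
  have h := add_one_le_exp (1 - a)
  nlinarith [mul_nonneg ha₀ (sub_nonneg.mpr ha₁)]

lemma four_mul_exp_neg_one_le_weightedLatencyDeriv2 {a c ϑ t : ℝ} (hϑ : 0 ≤ ϑ) (ha₀ : 0 ≤ a)
    (ha₁ : a ≤ 1) (hc : c ≤ 1) (ht₀ : 0 ≤ t) (ht₁ : t < 1) :
    4 * ϑ * exp (-1) ≤ weightedLatencyDeriv2 a c ϑ t := by
  have hu : 0 < 1 - t := sub_pos.mpr ht₁
  have hweight : exp (-a) ≤ exp (a * (t - c)) := exp_le_exp.mpr (by nlinarith)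
  have hL'' : 2 * ϑ ≤ 2 * ϑ / (1 - t) ^ 3 :=
    le_div_self (by positivity) (by positivity) (pow_le_one₀ hu.le (by linarith))
  have hL' : 2 * a * ϑ ≤ 2 * a * ϑ / (1 - t) ^ 2 :=
    le_div_self (by positivity) (by positivity) (pow_le_one₀ hu.le (by linarith))
  have hL : 0 ≤ a ^ 2 * (ϑ * t / (1 - t)) := by positivity
  calc 4 * ϑ * exp (-1) ≤ 2 * ϑ * exp (-1) * ((1 + a) * exp (1 - a)) := by
        have := two_le_one_add_mul_exp_one_sub ha₀ ha₁
        nlinarith [mul_le_mul_of_nonneg_left this (by positivity : 0 ≤ 2 * ϑ * exp (-1))]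
    _ = exp (-a) * (2 * a * ϑ + 2 * ϑ) := by
        rw [show -a = -1 + (1 - a) by ring, exp_add]; ring
    _ ≤ weightedLatencyDeriv2 a c ϑ t :=
        mul_le_mul hweight (by linarith) (by positivity) (exp_pos _).le

/-- For `ϑ > 0`, `κ ≥ 0`, `θ ∈ [0,1]` with `κθ ≤ 1`, and `ρ̂ ∈ (0,1)`, the weighted latency
indicator `g(ρ) = e^{κθ(ρ-ρ̂)}·ϑρ/(1-ρ)` satisfies `g''(ρ) ≥ 4ϑe⁻¹` on `[0, 1-ε]`;
in particular `g` is strongly convex there. -/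
theorem stmt_4 (ϑ κ θ ρhat ε : ℝ) (hϑ : 0 < ϑ) (hκ : 0 ≤ κ) (hθ : θ ∈ Set.Icc (0:ℝ) 1)
    (hκθ : κ * θ ≤ 1) (hρhat : ρhat ∈ Set.Ioo (0:ℝ) 1) (hε : ε ∈ Set.Ioo (0:ℝ) 1) :
    (∀ ρ ∈ Set.Icc (0:ℝ) (1 - ε),
      4 * ϑ * Real.exp (-1) ≤
        deriv (deriv (fun t : ℝ => Real.exp (κ * θ * (t - ρhat)) * (ϑ * t / (1 - t)))) ρ)
    ∧ StrongConvexOn (Set.Icc (0:ℝ) (1 - ε)) (4 * ϑ * Real.exp (-1))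
        (fun t : ℝ => Real.exp (κ * θ * (t - ρhat)) * (ϑ * t / (1 - t))) := by
  change (∀ ρ ∈ Icc (0:ℝ) (1 - ε), _ ≤ deriv (deriv (weightedLatency (κ * θ) ρhat ϑ)) ρ) ∧
    StrongConvexOn _ _ (weightedLatency (κ * θ) ρhat ϑ)
  have hlt : ∀ ρ ∈ Icc (0:ℝ) (1 - ε), ρ < 1 := fun ρ hρ => by linarith [hρ.2, hε.1]
  have hbound : ∀ ρ ∈ Icc (0:ℝ) (1 - ε),
      4 * ϑ * exp (-1) ≤ weightedLatencyDeriv2 (κ * θ) ρhat ϑ ρ := fun ρ hρ =>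
    four_mul_exp_neg_one_le_weightedLatencyDeriv2 hϑ.le (mul_nonneg hκ hθ.1) hκθ hρhat.2.le
      hρ.1 (hlt ρ hρ)
  refine ⟨fun ρ hρ => ?_, strongConvexOn_of_hasDerivAt2_ge (convex_Icc _ _)
    (fun x hx => hasDerivAt_weightedLatency (hlt x hx).ne)
    (fun x hx => hasDerivAt_weightedLatencyDeriv (hlt x hx).ne) hbound⟩
  rw [deriv_deriv_weightedLatency (hlt ρ hρ).ne]
  exact hbound ρ hρ
end

section
/- Let ψ(ρ) = Σ_{j∈B} w_j(ρ_j)L(ρ_j) where each w_j(ρ_j) = e^{κθ_j(ρ_j - ρ̂_j)} and L(ρ_j) = ϑ_j ρ_j/(1-ρ_j). Then ψ is strongly convex on the box [0, 1-ε]^B: its Hessian is diagonal with all diagonal entries bounded below by a positive constant q (one can take q = 4 min_j ϑ_j e^{-1} when κθ_j ≤ 1 for all j). -/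
/-!
With `a = κθ_j`, `c = ρ̂_j`, `v = ϑ_j`, on `[0, 1)` the second derivative of
`s ↦ e^{a(s-c)} v s/(1-s)` is `e^{a(s-c)} (2v/u³ + 2av/u² + a²vs/u)` with `u = 1 - s`. Dropping the last term and using
`e^{a(s-c)} ≥ e^{-au}` (as `c ≤ 1`), it is at least `(2v/u³) (1 + x) e^{-x}` with `x = au ∈ [0, 1]`.
Since `(1 + x) e^{-x}` decreases to `2/e` on `[0, 1]` and `u ≤ 1`, this is at least `4v/e`.
A separable sum of one-dimensional `m`-strongly convex functions is `m`-strongly convex for the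
Euclidean norm, because `‖ρ‖² = ∑ ρ_j²` is itself separable.
-/

open Set Real Topology

lemma two_mul_exp_neg_one_le_exp_neg_mul_one_add {x : ℝ} (hx₀ : 0 ≤ x) (hx₁ : x ≤ 1) :
    2 * exp (-1) ≤ exp (-x) * (1 + x) := by
  have h : 2 ≤ exp (1 - x) * (1 + x) := by
    nlinarith [add_one_le_exp (1 - x)]
  have hsplit : exp (-x) * (1 + x) = exp (-1) * (exp (1 - x) * (1 + x)) := by
    rw [show -x = -1 + (1 - x) by ring, exp_add, mul_assoc]
  rw [hsplit, mul_comm 2]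
  exact mul_le_mul_of_nonneg_left h (exp_pos _).le

lemma strongConvexOn_of_hasDerivWithinAt2_ge {D : Set ℝ} (hD : Convex ℝ D) {m : ℝ}
    {f f' f'' : ℝ → ℝ} (hf : ContinuousOn f D)
    (hf' : ∀ x ∈ interior D, HasDerivWithinAt f (f' x) (interior D) x)
    (hf'' : ∀ x ∈ interior D, HasDerivWithinAt f' (f'' x) (interior D) x)
    (hm : ∀ x ∈ interior D, m ≤ f'' x) : StrongConvexOn D m f := by
  rw [strongConvexOn_iff_convex]
  simp_rw [Real.norm_eq_abs, sq_abs]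
  refine convexOn_of_hasDerivWithinAt2_nonneg (f' := fun x ↦ f' x - m * x)
    (f'' := fun x ↦ f'' x - m) hD (hf.sub (by fun_prop)) (fun x hx ↦ ?_) (fun x hx ↦ ?_)
    (fun x hx ↦ sub_nonneg.2 (hm x hx))
  · exact ((hf' x hx).sub (((hasDerivAt_pow 2 x).const_mul (m / 2)).hasDerivWithinAt)).congr_deriv
      (by ring)
  · exact ((hf'' x hx).sub (((hasDerivAt_id x).const_mul m).hasDerivWithinAt)).congr_deriv
      (by ring)

theorem StrongConvexOn.euclideanSpace_sum {ι : Type*} [Fintype ι] {s : ι → Set ℝ} {m : ℝ}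
    {f : ι → ℝ → ℝ} (hf : ∀ i, StrongConvexOn (s i) m (f i)) :
    StrongConvexOn {x : EuclideanSpace ℝ ι | ∀ i, x i ∈ s i} m fun x ↦ ∑ i, f i (x i) := by
  set S := {x : EuclideanSpace ℝ ι | ∀ i, x i ∈ s i}
  have hS : S = ⋂ i, EuclideanSpace.proj i ⁻¹' s i := by ext; simp [S]
  have hSconv : Convex ℝ S := by
    rw [hS]
    exact convex_iInter fun i ↦ ((hf i).1.linear_preimage (EuclideanSpace.proj i).toLinearMap)
  have hcoord (i : ι) : ConvexOn ℝ S fun x ↦ f i (x i) - m / 2 * ‖x i‖ ^ 2 :=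
    ((strongConvexOn_iff_convex.1 (hf i)).comp_linearMap
      (EuclideanSpace.proj i).toLinearMap).subset (by rw [hS]; exact iInter_subset _ i) hSconv
  rw [strongConvexOn_iff_convex]
  have hsum : ConvexOn ℝ S (∑ i, fun x : EuclideanSpace ℝ ι ↦ f i (x i) - m / 2 * ‖x i‖ ^ 2) :=
    Finset.sum_induction _ (ConvexOn ℝ S) (fun _ _ ↦ ConvexOn.add) (convexOn_const 0 hSconv)
      fun i _ ↦ hcoord i
  have hsplit : (fun x : EuclideanSpace ℝ ι ↦ ∑ i, f i (x i) - m / 2 * ‖x‖ ^ 2) =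
      ∑ i, fun x : EuclideanSpace ℝ ι ↦ f i (x i) - m / 2 * ‖x i‖ ^ 2 := by
    ext x
    simp only [Finset.sum_apply, Finset.sum_sub_distrib, ← Finset.mul_sum,
      EuclideanSpace.norm_sq_eq]
  rw [hsplit]
  exact hsum

lemma hasDerivAt_exp_mul_sub (a c s : ℝ) :
    HasDerivAt (fun s ↦ exp (a * (s - c))) (exp (a * (s - c)) * a) s := by
  simpa using (((hasDerivAt_id s).sub_const c).const_mul a).exp

lemma hasDerivAt_mul_div_one_sub (v : ℝ) {s : ℝ} (hs : s ≠ 1) :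
    HasDerivAt (fun s ↦ v * s / (1 - s)) (v / (1 - s) ^ 2) s := by
  have hs' : 1 - s ≠ 0 := sub_ne_zero.2 hs.symm
  refine (((hasDerivAt_id' s).const_mul v).div ((hasDerivAt_id' s).const_sub 1) hs').congr_deriv ?_
  field_simp
  ring

lemma hasDerivAt_div_one_sub_sq (v : ℝ) {s : ℝ} (hs : s ≠ 1) :
    HasDerivAt (fun s ↦ v / (1 - s) ^ 2) (2 * v / (1 - s) ^ 3) s := by
  have hs' : 1 - s ≠ 0 := sub_ne_zero.2 hs.symm
  refine ((hasDerivAt_const s v).div (((hasDerivAt_id' s).const_sub 1).fun_pow 2)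
    (pow_ne_zero 2 hs')).congr_deriv ?_
  field_simp
  ring

section WeightedLoad

variable (a c v : ℝ)

noncomputable def weightedLoad (s : ℝ) : ℝ :=
  exp (a * (s - c)) * (v * s / (1 - s))

noncomputable def weightedLoadDeriv (s : ℝ) : ℝ :=
  exp (a * (s - c)) * (v / (1 - s) ^ 2 + a * (v * s / (1 - s)))

noncomputable def weightedLoadDeriv2 (s : ℝ) : ℝ :=
  exp (a * (s - c)) * (2 * v / (1 - s) ^ 3 + 2 * a * v / (1 - s) ^ 2 + a ^ 2 * (v * s / (1 - s)))

variable {a c v} {s : ℝ}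

lemma hasDerivAt_weightedLoad (hs : s ≠ 1) :
    HasDerivAt (weightedLoad a c v) (weightedLoadDeriv a c v s) s :=
  ((hasDerivAt_exp_mul_sub a c s).mul (hasDerivAt_mul_div_one_sub v hs)).congr_deriv
    (by simp only [weightedLoadDeriv]; ring)

lemma hasDerivAt_weightedLoadDeriv (hs : s ≠ 1) :
    HasDerivAt (weightedLoadDeriv a c v) (weightedLoadDeriv2 a c v s) s :=
  ((hasDerivAt_exp_mul_sub a c s).mul ((hasDerivAt_div_one_sub_sq v hs).fun_add
    ((hasDerivAt_mul_div_one_sub v hs).const_mul a))).congr_deriv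
    (by simp only [weightedLoadDeriv2]; ring)

lemma deriv_deriv_weightedLoad (hs : s ≠ 1) :
    deriv (deriv (weightedLoad a c v)) s = weightedLoadDeriv2 a c v s := by
  have hderiv : deriv (weightedLoad a c v) =ᶠ[𝓝 s] weightedLoadDeriv a c v :=
    (eventually_ne_nhds hs).mono fun _ ht ↦ (hasDerivAt_weightedLoad ht).deriv
  rw [hderiv.deriv_eq, (hasDerivAt_weightedLoadDeriv hs).deriv]

lemma four_mul_exp_neg_one_le_weightedLoadDeriv2 (hv : 0 ≤ v) (ha₀ : 0 ≤ a) (ha₁ : a ≤ 1)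
    (hc : c ≤ 1) (hs₀ : 0 ≤ s) (hs₁ : s < 1) :
    4 * v * exp (-1) ≤ weightedLoadDeriv2 a c v s := by
  set u := 1 - s
  have hu₀ : 0 < u := by linarith
  have hu₁ : u ≤ 1 := by linarith
  have hcube : 2 * v ≤ 2 * v / u ^ 3 :=
    le_div_self (by positivity) (by positivity) (pow_le_one₀ hu₀.le hu₁)
  have hexp : exp (-(a * u)) ≤ exp (a * (s - c)) := exp_le_exp.2 (by nlinarith)
  calc 4 * v * exp (-1) = 2 * v * (2 * exp (-1)) := by ring
    _ ≤ 2 * v / u ^ 3 * (exp (-(a * u)) * (1 + a * u)) :=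
        mul_le_mul hcube (two_mul_exp_neg_one_le_exp_neg_mul_one_add (by positivity)
          (mul_le_one₀ ha₁ hu₀.le hu₁)) (by positivity) (by positivity)
    _ = exp (-(a * u)) * (2 * v / u ^ 3 + 2 * a * v / u ^ 2) := by field_simp
    _ ≤ exp (a * (s - c)) * (2 * v / u ^ 3 + 2 * a * v / u ^ 2 + a ^ 2 * (v * s / u)) :=
        mul_le_mul hexp (le_add_of_nonneg_right (by positivity)) (by positivity) (exp_pos _).le

lemma strongConvexOn_weightedLoad (hv : 0 ≤ v) (ha₀ : 0 ≤ a) (ha₁ : a ≤ 1) (hc : c ≤ 1)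
    {b : ℝ} (hb : b < 1) : StrongConvexOn (Icc 0 b) (4 * v * exp (-1)) (weightedLoad a c v) := by
  have hne {t : ℝ} (ht : t ≤ b) : t ≠ 1 := (ht.trans_lt hb).ne
  refine strongConvexOn_of_hasDerivWithinAt2_ge (convex_Icc 0 b)
    (fun t ht ↦ (hasDerivAt_weightedLoad (hne ht.2)).continuousAt.continuousWithinAt)
    (f' := weightedLoadDeriv a c v) (f'' := weightedLoadDeriv2 a c v)
    (fun t ht ↦ ?_) (fun t ht ↦ ?_) (fun t ht ↦ ?_)
  all_goals rw [interior_Icc] at ht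
  · exact (hasDerivAt_weightedLoad (hne ht.2.le)).hasDerivWithinAt
  · exact (hasDerivAt_weightedLoadDeriv (hne ht.2.le)).hasDerivWithinAt
  · exact four_mul_exp_neg_one_le_weightedLoadDeriv2 hv ha₀ ha₁ hc ht.1.le (ht.2.trans hb)

end WeightedLoad

/-- `ψ(ρ) = Σ_j w_j(ρ_j)L(ρ_j)` with `w_j(ρ) = e^{κθ_j(ρ-ρ̂_j)}` and `L(ρ) = ϑ_jρ/(1-ρ)` is
strongly convex on the box `[0, 1-ε]^B`: its Hessian is diagonal with all diagonal entries
bounded below by `q = 4 (min_j ϑ_j) e⁻¹ > 0` when `κθ_j ≤ 1` for all `j`. -/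
theorem stmt_5 {B : Type*} [Fintype B] [Nonempty B]
    (ϑ θ ρhat : B → ℝ) (κ ε : ℝ)
    (hϑ : ∀ j, 0 < ϑ j) (hθ : ∀ j, θ j ∈ Set.Icc (0:ℝ) 1) (hκ : 0 ≤ κ)
    (hκθ : ∀ j, κ * θ j ≤ 1) (hρhat : ∀ j, ρhat j ∈ Set.Ioo (0:ℝ) 1)
    (hε : ε ∈ Set.Ioo (0:ℝ) 1) :
    (∀ j, ∀ t ∈ Set.Icc (0:ℝ) (1 - ε),
      4 * (Finset.univ.inf' Finset.univ_nonempty ϑ) * Real.exp (-1) ≤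
        deriv (deriv (fun s : ℝ =>
          Real.exp (κ * θ j * (s - ρhat j)) * (ϑ j * s / (1 - s)))) t)
    ∧ StrongConvexOn {ρ : EuclideanSpace ℝ B | ∀ j, ρ j ∈ Set.Icc (0:ℝ) (1 - ε)}
        (4 * (Finset.univ.inf' Finset.univ_nonempty ϑ) * Real.exp (-1))
        (fun ρ : EuclideanSpace ℝ B =>
          ∑ j, Real.exp (κ * θ j * (ρ j - ρhat j)) * (ϑ j * ρ j / (1 - ρ j))) := by
  have hb : 1 - ε < 1 := by linarith [hε.1]
  have hq (j : B) : 4 * Finset.univ.inf' Finset.univ_nonempty ϑ * exp (-1) ≤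
      4 * ϑ j * exp (-1) := by
    gcongr
    exact Finset.inf'_le _ (Finset.mem_univ j)
  have ha (j : B) : 0 ≤ κ * θ j := mul_nonneg hκ (hθ j).1
  refine ⟨fun j t ht ↦ ?_, StrongConvexOn.euclideanSpace_sum fun j ↦
    (strongConvexOn_weightedLoad (hϑ j).le (ha j) (hκθ j) (hρhat j).2.le hb).mono (hq j)⟩
  change _ ≤ deriv (deriv (weightedLoad _ _ _)) t
  rw [deriv_deriv_weightedLoad (ht.2.trans_lt hb).ne]
  exact (hq j).trans (four_mul_exp_neg_one_le_weightedLoadDeriv2 (hϑ j).le (ha j) (hκθ j)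
    (hρhat j).2.le ht.1 (ht.2.trans_lt hb))
end

section
/- Let ψ(ρ) = Σ_{j∈B} w_j(ρ_j)f(ρ_j) where each f is positive, convex, and non-decreasing on [0, 1-ε] and w_j(ρ_j) = e^{κθ_j(ρ_j-ρ̂_j)} with κθ_j > 0. Then ψ is strongly convex on [0, 1-ε]^B. -/
/-!
Write `e^{a(t-c)} f(t) = f(0) e^{a(t-c)} + e^{a(t-c)} (f(t) - f(0))`. On `t ≥ 0` the first term has
second derivative `f(0) a² e^{a(t-c)} ≥ f(0) a² e^{-ac}`, so it is strongly convex with that modulus;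
the second is convex as the product of two nonnegative, monotone, convex functions. A separable sum
of functions that are `m`-strongly convex in their own coordinates is `m`-strongly convex for the
Euclidean norm, because `‖x - y‖²` splits coordinatewise; take `m` the least of the finitely many
coordinate moduli.
-/

open Set Real

section
variable {E : Type*} [NormedAddCommGroup E] [NormedSpace ℝ E] {s t : Set E} {m : ℝ} {f g : E → ℝ}

lemma StrongConvexOn.subset (hf : StrongConvexOn t m f) (hst : s ⊆ t) (hs : Convex ℝ s) :
    StrongConvexOn s m f :=
  ⟨hs, fun _ hx _ hy => hf.2 (hst hx) (hst hy)⟩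

lemma StrongConvexOn.add_convexOn (hf : StrongConvexOn s m f) (hg : ConvexOn ℝ s g) :
    StrongConvexOn s m (f + g) := by
  simpa [StrongConvexOn] using hf.add (uniformConvexOn_zero.2 hg)

end

lemma strongConvexOn_const_mul_exp_mul_sub {a c C : ℝ} (ha : 0 ≤ a) (hC : 0 ≤ C) :
    StrongConvexOn (Ici 0) (C * exp (-(a * c)) * a ^ 2) fun t => C * exp (a * (t - c)) := by
  set m := C * exp (-(a * c)) * a ^ 2
  have hexp (t : ℝ) : HasDerivAt (fun t => exp (a * (t - c))) (a * exp (a * (t - c))) t := by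
    simpa [mul_comm] using (((hasDerivAt_id t).sub_const c).const_mul a).exp
  have hsq (t : ℝ) : HasDerivAt (fun t => t ^ 2) (2 * t) t := by
    simpa using hasDerivAt_pow 2 t
  have hderiv (t : ℝ) : HasDerivAt (fun t => C * exp (a * (t - c)) - m / 2 * t ^ 2)
      (C * a * exp (a * (t - c)) - m * t) t :=
    (((hexp t).const_mul C).sub ((hsq t).const_mul (m / 2))).congr_deriv (by ring)
  have hderiv2 (t : ℝ) : HasDerivAt (fun t => C * a * exp (a * (t - c)) - m * t)
      (C * a ^ 2 * exp (a * (t - c)) - m) t :=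
    (((hexp t).const_mul (C * a)).sub ((hasDerivAt_id t).const_mul m)).congr_deriv (by ring)
  rw [strongConvexOn_iff_convex]
  simp only [Real.norm_eq_abs, sq_abs]
  refine convexOn_of_hasDerivWithinAt2_nonneg (convex_Ici 0)
    (fun t _ => (hderiv t).continuousAt.continuousWithinAt)
    (fun t _ => (hderiv t).hasDerivWithinAt) (fun t _ => (hderiv2 t).hasDerivWithinAt) ?_
  intro t ht
  rw [interior_Ici, mem_Ioi] at ht
  have : exp (-(a * c)) ≤ exp (a * (t - c)) := exp_le_exp.2 (by nlinarith)
  have := mul_le_mul_of_nonneg_left this (mul_nonneg hC (sq_nonneg a))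
  simp only [m]
  linarith

lemma strongConvexOn_exp_mul_sub_mul {a c L : ℝ} {f : ℝ → ℝ} (ha : 0 ≤ a) (hf0 : 0 ≤ f 0)
    (hfconv : ConvexOn ℝ (Icc 0 L) f) (hfmono : MonotoneOn f (Icc 0 L)) :
    StrongConvexOn (Icc 0 L) (f 0 * exp (-(a * c)) * a ^ 2) fun t => exp (a * (t - c)) * f t := by
  have hexp : StrongConvexOn (Icc 0 L) (f 0 * exp (-(a * c)) * a ^ 2)
      fun t => f 0 * exp (a * (t - c)) :=
    (strongConvexOn_const_mul_exp_mul_sub ha hf0).subset Icc_subset_Ici_self (convex_Icc 0 L)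
  have hexp_convex : ConvexOn ℝ (Icc 0 L) fun t => exp (a * (t - c)) := by
    simpa using ((strongConvexOn_const_mul_exp_mul_sub (c := c) ha zero_le_one).subset
      Icc_subset_Ici_self (convex_Icc 0 L)).convexOn fun r => by positivity
  have hexp_mono : MonotoneOn (fun t => exp (a * (t - c))) (Icc 0 L) :=
    fun x _ y _ hxy => exp_le_exp.2 (by nlinarith)
  have hf_le (t) (ht : t ∈ Icc 0 L) : f 0 ≤ f t :=
    hfmono ⟨le_rfl, ht.1.trans ht.2⟩ ht ht.1
  have hprod : ConvexOn ℝ (Icc 0 L) fun t => exp (a * (t - c)) * (f t - f 0) :=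
    hexp_convex.mul (hfconv.sub (concaveOn_const _ (convex_Icc 0 L)))
      (fun t _ => (exp_pos _).le) (fun t ht => sub_nonneg.2 (hf_le t ht))
      (hexp_mono.monovaryOn fun x hx y hy hxy => sub_le_sub_right (hfmono hx hy hxy) _)
  convert hexp.add_convexOn hprod using 1
  ext t
  simp only [Pi.add_apply]
  ring

lemma StrongConvexOn.sum_euclideanSpace {ι : Type*} [Fintype ι] {s : ι → Set ℝ} {m : ℝ}
    {g : ι → ℝ → ℝ} (hg : ∀ i, StrongConvexOn (s i) m (g i)) :
    StrongConvexOn {x : EuclideanSpace ℝ ι | ∀ i, x i ∈ s i} m fun x => ∑ i, g i (x i) := by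
  refine ⟨fun x hx y hy a b ha hb hab i => by simpa using (hg i).1 (hx i) (hy i) ha hb hab,
    fun x hx y hy a b ha hb hab => ?_⟩
  calc ∑ i, g i ((a • x + b • y) i)
      ≤ ∑ i, (a * g i (x i) + b * g i (y i) - a * b * (m / 2 * (x i - y i) ^ 2)) := by
        refine Finset.sum_le_sum fun i _ => ?_
        simpa [Real.norm_eq_abs, sq_abs] using (hg i).2 (hx i) (hy i) ha hb hab
    _ = a • ∑ i, g i (x i) + b • ∑ i, g i (y i) - a * b * (m / 2 * ‖x - y‖ ^ 2) := by
        simp only [EuclideanSpace.real_norm_sq_eq, smul_eq_mul, Finset.mul_sum,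
          ← Finset.sum_add_distrib, ← Finset.sum_sub_distrib, PiLp.sub_apply]

lemma exists_pos_forall_le_of_finite {ι : Type*} [Finite ι] {m : ι → ℝ} (hm : ∀ i, 0 < m i) :
    ∃ q > 0, ∀ i, q ≤ m i := by
  cases isEmpty_or_nonempty ι
  · exact ⟨1, one_pos, fun i => isEmptyElim i⟩
  · obtain ⟨i₀, hi₀⟩ := Finite.exists_min m
    exact ⟨m i₀, hm i₀, hi₀⟩

theorem stmt_10_general {B : Type*} [Fintype B]
    (θ ρhat : B → ℝ) (κ ε : ℝ)
    (hκθ : ∀ j, 0 < κ * θ j) (hε : ε ∈ Set.Ioo (0:ℝ) 1)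
    (f : ℝ → ℝ)
    (hfpos : ∀ ρ ∈ Set.Icc (0:ℝ) (1 - ε), 0 < f ρ)
    (hfconv : ConvexOn ℝ (Set.Icc (0:ℝ) (1 - ε)) f)
    (hfmono : MonotoneOn f (Set.Icc (0:ℝ) (1 - ε))) :
    ∃ q > (0:ℝ), StrongConvexOn {ρ : EuclideanSpace ℝ B | ∀ j, ρ j ∈ Set.Icc (0:ℝ) (1 - ε)} q
      (fun ρ : EuclideanSpace ℝ B => ∑ j, Real.exp (κ * θ j * (ρ j - ρhat j)) * f (ρ j)) := by
  have hf0 : 0 < f 0 := hfpos 0 ⟨le_rfl, by linarith [hε.2]⟩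
  obtain ⟨q, hq, hq_le⟩ := exists_pos_forall_le_of_finite (m := fun j =>
    f 0 * exp (-(κ * θ j * ρhat j)) * (κ * θ j) ^ 2) fun j => by have := hκθ j; positivity
  exact ⟨q, hq, StrongConvexOn.sum_euclideanSpace fun j =>
    (strongConvexOn_exp_mul_sub_mul (hκθ j).le hf0.le hfconv hfmono).mono (hq_le j)⟩

/-- `ψ(ρ) = Σ_j w_j(ρ_j) f(ρ_j)`, with `f` positive, convex and non-decreasing on `[0,1-ε]`
and `w_j(ρ) = e^{κθ_j(ρ-ρ̂_j)}`, `κθ_j > 0`, is strongly convex on the box `[0, 1-ε]^B`. -/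
theorem stmt_10 {B : Type*} [Fintype B] [Nonempty B]
    (θ ρhat : B → ℝ) (κ ε : ℝ)
    (hκθ : ∀ j, 0 < κ * θ j) (hθ : ∀ j, θ j ∈ Set.Icc (0:ℝ) 1)
    (hρhat : ∀ j, ρhat j ∈ Set.Ioo (0:ℝ) 1) (hε : ε ∈ Set.Ioo (0:ℝ) 1)
    (f : ℝ → ℝ)
    (hfpos : ∀ ρ ∈ Set.Icc (0:ℝ) (1 - ε), 0 < f ρ)
    (hfconv : ConvexOn ℝ (Set.Icc (0:ℝ) (1 - ε)) f)
    (hfmono : MonotoneOn f (Set.Icc (0:ℝ) (1 - ε))) :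
    ∃ q > (0:ℝ), StrongConvexOn {ρ : EuclideanSpace ℝ B | ∀ j, ρ j ∈ Set.Icc (0:ℝ) (1 - ε)} q
      (fun ρ : EuclideanSpace ℝ B => ∑ j, Real.exp (κ * θ j * (ρ j - ρhat j)) * f (ρ j)) :=
  stmt_10_general θ ρhat κ ε hκθ hε f hfpos hfconv hfmono
end
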